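/- Let S be a continuous t-conorm on [0,1] with residuum ⊸. Then for all x, y ∈ [0,1], max{(x ⊸ y) ⊸ y, (y ⊸ x) ⊸ x} = min{x, y}. (This is the identity expressing that in metric semantics the weak disjunction φ∨ψ := ((φ→ψ)→ψ)∧((ψ→φ)→φ) is interpreted by the minimum of the truth values.) -/
import Mathlib


open unitInterval

instance : Fact ((0:ℝ) ≤ 1) := ⟨zero_le_one⟩

/-- A continuous t-conorm on the unit interval `[0,1]`: continuous (w.r.t. the
Euclidean topology), commutative, associative, nondecreasing in each argument,
with `0` as neutral element. -/
structure IsContTConorm (S : I → I → I) : Prop where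
  continuous : Continuous fun p : I × I => S p.1 p.2
  comm : ∀ x y, S x y = S y x
  assoc : ∀ x y z, S (S x y) z = S x (S y z)
  mono : ∀ x₁ x₂ y₁ y₂, x₁ ≤ x₂ → y₁ ≤ y₂ → S x₁ y₁ ≤ S x₂ y₂
  zero_left : ∀ x, S 0 x = x

/-- The residuum of a t-conorm: `x ⊸ y = inf {z ∈ [0,1] : S(z,x) ≥ y}`. -/
noncomputable def resid (S : I → I → I) (x y : I) : I :=
  sInf {z : I | y ≤ S z x}

lemma resid_le {S : I → I → I} {x y z : I} (h : y ≤ S z x) : resid S x y ≤ z :=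
  csInf_le (OrderBot.bddBelow _) h

lemma le_S_resid {S : I → I → I} (hS : IsContTConorm S) (x y : I) :
    y ≤ S (resid S x y) x := by
  have hc : Continuous fun z : I => S z x :=
    hS.continuous.comp (Continuous.prodMk continuous_id continuous_const)
  have hcl : IsClosed {z : I | y ≤ S z x} := isClosed_le continuous_const hc
  have hne : ({z : I | y ≤ S z x}).Nonempty := by
    refine ⟨1, ?_⟩
    have : (1 : I) = S 1 0 := by rw [hS.comm, hS.zero_left]
    calc y ≤ 1 := le_one'
    _ = S 1 0 := this
    _ ≤ S 1 x := hS.mono _ _ _ _ le_rfl (nonneg' )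
  exact hcl.csInf_mem hne (OrderBot.bddBelow _)

lemma resid_eq_zero {S : I → I → I} (hS : IsContTConorm S) {x y : I} (h : y ≤ x) :
    resid S x y = 0 :=
  le_antisymm (resid_le (by rw [hS.zero_left]; exact h)) nonneg'

lemma resid_zero {S : I → I → I} (hS : IsContTConorm S) (x : I) :
    resid S 0 x = x := by
  have : {z : I | x ≤ S z 0} = Set.Ici x := by
    ext z; simp [hS.comm z 0, hS.zero_left]
  rw [resid, this, csInf_Ici]

lemma weak_half {S : I → I → I} (hS : IsContTConorm S) {x y : I} (hxy : x ≤ y) :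
    max (resid S (resid S x y) y) (resid S (resid S y x) x) = x := by
  have h1 : resid S (resid S x y) y ≤ x :=
    resid_le (by rw [hS.comm]; exact le_S_resid hS x y)
  have h2 : resid S (resid S y x) x = x := by
    rw [resid_eq_zero hS hxy, resid_zero hS]
  rw [h2, max_eq_right h1]

/-- `max{(x ⊸ y) ⊸ y, (y ⊸ x) ⊸ x} = min{x, y}`: in metric semantics the weak
disjunction is interpreted by the minimum of the truth values. -/
theorem weak_disjunction_eq_min (S : I → I → I) (hS : IsContTConorm S) :
    ∀ x y : I, max (resid S (resid S x y) y) (resid S (resid S y x) x) = min x y := by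
  intro x y
  rcases le_total x y with h | h
  · rw [weak_half hS h, min_eq_left h]
  · rw [max_comm, weak_half hS h, min_eq_right h]
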